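/- Let n be a nonempty finite type and v : EuclideanSpace ℂ n a unit vector; define the pure state ω(X) = vᴴ X v on Matrix n n ℂ. Let S₁, S₂ be subsets of Matrix n n ℂ such that the ℂ-linear span of {X * Y : X ∈ S₁, Y ∈ S₂} is all of Matrix n n ℂ, and such that the identity matrix belongs to both S₁ and S₂. Suppose there are finitely many reals λ_k ≥ 0 with ∑_k λ_k = 1 and states Ω_k, ω_k¹, ω_k² on Matrix n n ℂ (linear functionals with Ω(1) = 1 and Ω(XᴴX) ≥ 0 for all X) satisfying Ω_k(X * Y) = ω_k¹(X) · ω_k²(Y) and ω(X * Y) = ∑_k λ_k · Ω_k(X * Y) for all X ∈ S₁, Y ∈ S₂. Then ω(X * Y) = ω(X) · ω(Y) for all X ∈ S₁ and Y ∈ S₂. -/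

import Mathlib

open scoped BigOperators ComplexOrder
open Matrix

/-- The pure state `X ↦ vᴴ X v` on the matrix algebra. -/
noncomputable def pureState {n : Type*} [Fintype n] (v : EuclideanSpace ℂ n)
    (X : Matrix n n ℂ) : ℂ :=
  ∑ i, ∑ j, starRingEnd ℂ (v i) * X i j * v j

/-!
The pure state `ω` agrees with `∑ λ_k Ω_k` on the products `XY`, which span, so everywhere.
If `Xv = 0` then `ω(XᴴX) = 0`, so by positivity every `Ω_k` with `λ_k > 0` vanishes on `XᴴX`,
and by Cauchy–Schwarz on `X`. A state vanishing on the left ideal annihilating `v` is `ω`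
itself: purity. So `ω = Ω_k` factorizes, and taking `Y = 1` or `X = 1` identifies the factors
with `ω`.
-/

section StarAlgebra

variable {A : Type*} [Ring A] [StarRing A] [Algebra ℂ A]

def IsState (φ : A →ₗ[ℂ] ℂ) : Prop := φ 1 = 1 ∧ ∀ a, 0 ≤ φ (star a * a)

theorem map_star_mul_self_eq_zero_of_sum_smul {K : Type*} [Fintype K] {lam : K → ℝ}
    (hlam : ∀ k, 0 ≤ lam k) {Ω : K → A →ₗ[ℂ] ℂ} (hpos : ∀ k a, 0 ≤ Ω k (star a * a)) {a : A}
    (ha : (∑ k, (lam k : ℂ) • Ω k) (star a * a) = 0) {k : K} (hk : lam k ≠ 0) :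
    Ω k (star a * a) = 0 := by
  simp only [LinearMap.sum_apply, LinearMap.smul_apply, smul_eq_mul] at ha
  have hterm := (Finset.sum_eq_zero_iff_of_nonneg fun j _ =>
    mul_nonneg (by exact_mod_cast hlam j) (hpos j a)).mp ha k (Finset.mem_univ k)
  exact (mul_eq_zero.mp hterm).resolve_left (by exact_mod_cast hk)

variable [StarModule ℂ A]

theorem map_star_of_nonneg (φ : A →ₗ[ℂ] ℂ) (hpos : ∀ a, 0 ≤ φ (star a * a)) (a : A) :
    φ (star a) = star (φ a) := by
  -- `φ (star b * b)` is real for `b = 1 + a` and `b = 1 + i a`; this pins down `φ (star a)`.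
  have him : ∀ b, (φ (star b * b)).im = 0 := fun b => (Complex.le_def.mp (hpos b)).2.symm
  have h₁ : star (1 + a) * (1 + a) = 1 + a + star a + star a * a := by
    simp only [star_add, star_one]; noncomm_ring
  have h₂ : star (1 + Complex.I • a) * (1 + Complex.I • a)
      = 1 + Complex.I • a - Complex.I • star a + star a * a := by
    simp only [star_add, star_one, star_smul, Complex.star_def, Complex.conj_I, add_mul, mul_add,
      one_mul, mul_one, smul_mul_assoc, mul_smul_comm, smul_add, smul_smul, mul_neg, Complex.I_mul_I,
      neg_neg, one_smul]
    module
  have hone : (φ 1).im = 0 := by simpa using him 1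
  have him₁ := him (1 + a)
  have him₂ := him (1 + Complex.I • a)
  rw [h₁] at him₁
  rw [h₂] at him₂
  simp only [map_add, map_sub, map_smul, smul_eq_mul, Complex.add_im, Complex.sub_im,
    Complex.mul_im, Complex.I_re, Complex.I_im, hone, him a] at him₁ him₂
  apply Complex.ext <;> simp only [Complex.star_def, Complex.conj_re, Complex.conj_im] <;> linarith

theorem IsState.map_eq_zero_of_map_star_mul_self {φ : A →ₗ[ℂ] ℂ} (hφ : IsState φ) {a : A}
    (ha : φ (star a * a) = 0) : φ a = 0 := by
  set t := φ a
  have e : star (a - t • 1) * (a - t • 1)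
      = star a * a - t • star a - star t • a + (star t * t) • 1 := by
    simp only [star_sub, star_smul, star_one, sub_mul, mul_sub, smul_mul_assoc, mul_smul_comm,
      one_mul, mul_one]
    module
  have hval : φ (star (a - t • 1) * (a - t • 1)) = -(Complex.normSq t : ℂ) := by
    rw [e, map_add, map_sub, map_sub, map_smul, map_smul, map_smul, map_star_of_nonneg φ hφ.2, ha,
      hφ.1, Complex.normSq_eq_conj_mul_self]
    simp only [smul_eq_mul, Complex.star_def]
    ring
  have key := hφ.2 (a - t • 1)
  rw [hval, ← Complex.ofReal_neg, Complex.zero_le_real] at key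
  exact Complex.normSq_eq_zero.mp (le_antisymm (by linarith) (Complex.normSq_nonneg t))

end StarAlgebra

section PureState

variable {n : Type*} [Fintype n]

theorem pureState_eq_dotProduct (v : EuclideanSpace ℂ n) (X : Matrix n n ℂ) :
    pureState v X = star v.ofLp ⬝ᵥ X *ᵥ v.ofLp := by
  simp [pureState, dotProduct, mulVec, Finset.mul_sum, mul_assoc]

noncomputable def pureStateₗ (v : EuclideanSpace ℂ n) : Matrix n n ℂ →ₗ[ℂ] ℂ where
  toFun := pureState v
  map_add' X Y := by simp only [pureState_eq_dotProduct, add_mulVec, dotProduct_add]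
  map_smul' c X := by
    simp only [pureState_eq_dotProduct, smul_mulVec, dotProduct_smul, RingHom.id_apply]

theorem star_dotProduct_self_of_norm_eq_one {v : EuclideanSpace ℂ n} (hv : ‖v‖ = 1) :
    star v.ofLp ⬝ᵥ v.ofLp = 1 := by
  rw [dotProduct_comm, ← EuclideanSpace.inner_eq_star_dotProduct, inner_self_eq_norm_sq_to_K, hv]
  norm_num

theorem vecMulVec_star_self_mulVec_self {u : n → ℂ} (hu : star u ⬝ᵥ u = 1) :
    vecMulVec u (star u) *ᵥ u = u := by
  rw [vecMulVec_mulVec, hu, MulOpposite.op_one, one_smul]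

theorem vecMulVec_star_self_mul_mul_vecMulVec_star_self (u : n → ℂ) (X : Matrix n n ℂ) :
    vecMulVec u (star u) * X * vecMulVec u (star u)
      = (star u ⬝ᵥ X *ᵥ u) • vecMulVec u (star u) := by
  rw [vecMulVec_mul, vecMulVec_mul_vecMulVec, vecMulVec_smul, dotProduct_mulVec]

theorem pureStateₗ_apply (v : EuclideanSpace ℂ n) (X : Matrix n n ℂ) :
    pureStateₗ v X = pureState v X := rfl

theorem pureState_conjTranspose_mul_self_of_mulVec_eq_zero {v : EuclideanSpace ℂ n}
    {X : Matrix n n ℂ} (hX : X *ᵥ v.ofLp = 0) : pureState v (Xᴴ * X) = 0 := by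
  rw [pureState_eq_dotProduct, ← mulVec_mulVec, hX, mulVec_zero, dotProduct_zero]

theorem IsState.eq_pureStateₗ [DecidableEq n] {v : EuclideanSpace ℂ n} (hv : ‖v‖ = 1)
    {φ : Matrix n n ℂ →ₗ[ℂ] ℂ} (hφ : IsState φ)
    (hker : ∀ X : Matrix n n ℂ, X *ᵥ v.ofLp = 0 → φ (Xᴴ * X) = 0) : φ = pureStateₗ v := by
  set u := v.ofLp
  set P := vecMulVec u (star u)
  have hvanish : ∀ X : Matrix n n ℂ, X *ᵥ u = 0 → φ X = 0 := fun X hX =>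
    hφ.map_eq_zero_of_map_star_mul_self (hker X hX)
  have hQ : (1 - P) *ᵥ u = 0 := by
    rw [sub_mulVec, one_mulVec,
      vecMulVec_star_self_mulVec_self (star_dotProduct_self_of_norm_eq_one hv), sub_self]
  have hφP : φ P = 1 := by
    rw [← hφ.1, eq_comm, ← sub_eq_zero, ← map_sub, hvanish _ hQ]
  refine LinearMap.ext fun X => ?_
  -- In `X = PXP + PX(1 - P) + (1 - P)X` the last two terms, or their adjoints, annihilate `v`.
  have hright : φ (P * X * (1 - P)) = 0 := hvanish _ (by rw [← mulVec_mulVec, hQ, mulVec_zero])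
  have hleft : φ ((1 - P) * X) = 0 := by
    have hadj : (1 - P) * X = star (Xᴴ * (1 - P)) := by
      rw [star_eq_conjTranspose, conjTranspose_mul, conjTranspose_conjTranspose, conjTranspose_sub,
        conjTranspose_one, conjTranspose_vecMulVec, star_star]
    rw [hadj, map_star_of_nonneg φ hφ.2, hvanish _ (by rw [← mulVec_mulVec, hQ, mulVec_zero]),
      star_zero]
  calc φ X = φ (P * X * P) + φ (P * X * (1 - P)) + φ ((1 - P) * X) := by
        rw [← map_add, ← map_add]; congr 1; noncomm_ring
    _ = pureStateₗ v X := by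
        rw [hright, hleft, vecMulVec_star_self_mul_mul_vecMulVec_star_self, map_smul, hφP,
          smul_eq_mul, mul_one, add_zero, add_zero, pureStateₗ_apply, pureState_eq_dotProduct]

theorem eq_pureStateₗ_of_sum_smul [DecidableEq n] {v : EuclideanSpace ℂ n}
    (hv : ‖v‖ = 1) {K : Type*} [Fintype K] {lam : K → ℝ} (hlam : ∀ k, 0 ≤ lam k)
    {Ω : K → Matrix n n ℂ →ₗ[ℂ] ℂ} (hΩ : ∀ k, IsState (Ω k))
    (hsum : pureStateₗ v = ∑ k, (lam k : ℂ) • Ω k) {k : K} (hk : lam k ≠ 0) :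
    Ω k = pureStateₗ v :=
  (hΩ k).eq_pureStateₗ hv fun X hX =>
    map_star_mul_self_eq_zero_of_sum_smul hlam (fun j => (hΩ j).2)
      (by rw [← hsum, pureStateₗ_apply]
          exact pureState_conjTranspose_mul_self_of_mulVec_eq_zero hX) hk

end PureState

theorem pure_separable_state_factorizes
    {n : Type*} [Fintype n] [DecidableEq n]
    (v : EuclideanSpace ℂ n) (hv : ‖v‖ = 1)
    (S₁ S₂ : Set (Matrix n n ℂ))
    (hspan : Submodule.span ℂ {Z : Matrix n n ℂ | ∃ X ∈ S₁, ∃ Y ∈ S₂, Z = X * Y} = ⊤)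
    (h₁ : (1 : Matrix n n ℂ) ∈ S₁) (h₂ : (1 : Matrix n n ℂ) ∈ S₂)
    (K : Type*) [Fintype K] (lam : K → ℝ)
    (hlam : ∀ k, 0 ≤ lam k) (hlamsum : ∑ k, lam k = 1)
    (Ω ω₁ ω₂ : K → (Matrix n n ℂ →ₗ[ℂ] ℂ))
    (hΩstate : ∀ k, Ω k 1 = 1 ∧ ∀ X : Matrix n n ℂ, 0 ≤ Ω k (Xᴴ * X))
    (hω₁state : ∀ k, ω₁ k 1 = 1 ∧ ∀ X : Matrix n n ℂ, 0 ≤ ω₁ k (Xᴴ * X))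
    (hω₂state : ∀ k, ω₂ k 1 = 1 ∧ ∀ X : Matrix n n ℂ, 0 ≤ ω₂ k (Xᴴ * X))
    (hfact : ∀ k, ∀ X ∈ S₁, ∀ Y ∈ S₂, Ω k (X * Y) = ω₁ k X * ω₂ k Y)
    (hdecomp : ∀ X ∈ S₁, ∀ Y ∈ S₂,
      pureState v (X * Y) = ∑ k, (lam k : ℂ) * Ω k (X * Y)) :
    ∀ X ∈ S₁, ∀ Y ∈ S₂, pureState v (X * Y) = pureState v X * pureState v Y := by
  have hsum : pureStateₗ v = ∑ k, (lam k : ℂ) • Ω k := by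
    refine LinearMap.ext_on hspan ?_
    rintro _ ⟨X, hX, Y, hY, rfl⟩
    simpa only [pureStateₗ_apply, LinearMap.sum_apply, LinearMap.smul_apply, smul_eq_mul]
      using hdecomp X hX Y hY
  obtain ⟨k, hk⟩ : ∃ k, lam k ≠ 0 := by
    by_contra! h
    simp [h] at hlamsum
  have hΩk : ∀ Z, pureState v Z = Ω k Z := fun Z => by
    rw [eq_pureStateₗ_of_sum_smul hv hlam hΩstate hsum hk, pureStateₗ_apply]
  intro X hX Y hY
  have hX₁ : pureState v X = ω₁ k X := by
    simpa [hΩk, (hω₂state k).1] using hfact k X hX 1 h₂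
  have hY₂ : pureState v Y = ω₂ k Y := by
    simpa [hΩk, (hω₁state k).1] using hfact k 1 h₁ Y hY
  rw [hX₁, hY₂, hΩk, hfact k X hX Y hY]
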